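/- arXiv:2002.03690 — 7 statements merged into one kernel-verified Lean document; each statement's English description precedes it below -/
import Mathlib

section
/- For all real numbers a, b: ((log((1+tanh(a/2))/(1+tanh(b/2))))² + (log((1-tanh(a/2))/(1-tanh(b/2))))²)/2 ≤ (a - b)²/2. In particular the average of the two squared log-differences is at most half the squared distance. -/
/-!
Since `1 ± tanh t = exp (± t) / cosh t`, the two log-ratios are `±(s - t) - D` with `s = a / 2`,
`t = b / 2` and `D = log (cosh s) - log (cosh t)`. Their squares sum to `2 (s - t)² + 2 D²`, and
`log ∘ cosh` is `1`-Lipschitz because its derivative is `tanh`, so `D² ≤ (s - t)²` and the sum is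
at most `4 (s - t)² = (a - b)²`.
-/

open Real

namespace Real

theorem hasDerivAt_log_cosh (x : ℝ) : HasDerivAt (fun x => log (cosh x)) (tanh x) x := by
  convert (hasDerivAt_cosh x).log (cosh_pos x).ne' using 1
  rw [tanh_eq_sinh_div_cosh]

theorem lipschitzWith_log_cosh : LipschitzWith 1 fun x => log (cosh x) := by
  refine lipschitzWith_of_nnnorm_deriv_le (fun x => (hasDerivAt_log_cosh x).differentiableAt)
    fun x => ?_
  rw [(hasDerivAt_log_cosh x).deriv, ← NNReal.coe_le_coe, coe_nnnorm, norm_eq_abs,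
    NNReal.coe_one]
  exact (abs_tanh_lt_one x).le

theorem sq_log_cosh_sub_le (s t : ℝ) : (log (cosh s) - log (cosh t)) ^ 2 ≤ (s - t) ^ 2 := by
  have h := lipschitzWith_log_cosh.dist_le_mul s t
  rw [dist_eq, dist_eq, NNReal.coe_one, one_mul] at h
  exact sq_le_sq.mpr h

theorem log_one_add_tanh (t : ℝ) : log (1 + tanh t) = t - log (cosh t) := by
  have h : 1 + tanh t = exp t / cosh t := by
    rw [tanh_eq_sinh_div_cosh, ← cosh_add_sinh]
    field_simp
  rw [h, log_div (exp_pos t).ne' (cosh_pos t).ne', log_exp]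

theorem log_one_add_tanh_div_one_add_tanh (s t : ℝ) :
    log ((1 + tanh s) / (1 + tanh t)) = (s - t) - (log (cosh s) - log (cosh t)) := by
  have one_add_tanh_ne_zero (x : ℝ) : 1 + tanh x ≠ 0 := by
    linarith [neg_one_lt_tanh x]
  rw [log_div (one_add_tanh_ne_zero s) (one_add_tanh_ne_zero t), log_one_add_tanh,
    log_one_add_tanh]
  ring

theorem log_one_sub_tanh_div_one_sub_tanh (s t : ℝ) :
    log ((1 - tanh s) / (1 - tanh t)) = -(s - t) - (log (cosh s) - log (cosh t)) := by
  simpa only [tanh_neg, cosh_neg, ← sub_eq_add_neg, neg_sub_neg, neg_sub]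
    using log_one_add_tanh_div_one_add_tanh (-s) (-t)

end Real

/-- For all real `a, b`, the average of the two squared log-differences is at most half
of the squared distance:
`((log((1+tanh(a/2))/(1+tanh(b/2))))² + (log((1-tanh(a/2))/(1-tanh(b/2))))²)/2 ≤ (a-b)²/2`. -/
theorem stmt_2 (a b : ℝ) :
    ((Real.log ((1 + Real.tanh (a / 2)) / (1 + Real.tanh (b / 2)))) ^ 2 +
        (Real.log ((1 - Real.tanh (a / 2)) / (1 - Real.tanh (b / 2)))) ^ 2) / 2 ≤
      (a - b) ^ 2 / 2 := by
  rw [log_one_add_tanh_div_one_add_tanh, log_one_sub_tanh_div_one_sub_tanh]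
  have h := sq_log_cosh_sub_le (a / 2) (b / 2)
  nlinarith
end

section
/- For all real numbers a, b: |log((1+tanh(a/2))/(1+tanh(b/2)))| + |log((1-tanh(a/2))/(1-tanh(b/2)))| ≤ |a - b|. -/
open Real

/-! Since `tanh` is increasing, `x ↦ log (1 + tanh x)` is increasing and `x ↦ log (1 - tanh x)`
is decreasing, while their difference is `2 * artanh (tanh x) = 2 * x`. So the two logarithms in
the statement have opposite signs and differ by `a - b`, and the sum of their absolute values is
in fact equal to `|a - b|`. -/

theorem abs_sub_add_abs_sub_of_monotone_of_antitone {α β : Type*} [LinearOrder α]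
    [AddCommGroup β] [LinearOrder β] [IsOrderedAddMonoid β] {f g : α → β}
    (hf : Monotone f) (hg : Antitone g) (a b : α) :
    |f a - f b| + |g a - g b| = |(f a - g a) - (f b - g b)| := by
  rw [show f a - g a - (f b - g b) = (f a - f b) + (g b - g a) by abel]
  rcases le_total b a with hba | hab
  · rw [abs_of_nonneg (sub_nonneg.2 (hf hba)), abs_of_nonpos (sub_nonpos.2 (hg hba)),
      abs_of_nonneg (add_nonneg (sub_nonneg.2 (hf hba)) (sub_nonneg.2 (hg hba)))]
    abel
  · rw [abs_of_nonpos (sub_nonpos.2 (hf hab)), abs_of_nonneg (sub_nonneg.2 (hg hab)),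
      abs_of_nonpos (add_nonpos (sub_nonpos.2 (hf hab)) (sub_nonpos.2 (hg hab)))]
    abel

namespace Real

theorem strictMono_tanh : StrictMono tanh := fun x y hxy => by
  have hmem (z : ℝ) : tanh z ∈ Set.Ioo (-1) 1 := ⟨neg_one_lt_tanh z, tanh_lt_one z⟩
  rwa [← artanh_lt_artanh_iff (hmem x) (hmem y), artanh_tanh, artanh_tanh]

theorem one_add_tanh_pos (x : ℝ) : 0 < 1 + tanh x := by linarith [neg_one_lt_tanh x]

theorem one_sub_tanh_pos (x : ℝ) : 0 < 1 - tanh x := by linarith [tanh_lt_one x]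

theorem monotone_log_one_add_tanh : Monotone fun x => log (1 + tanh x) := fun _ _ hxy =>
  log_le_log (one_add_tanh_pos _) (by linarith [strictMono_tanh.monotone hxy])

theorem antitone_log_one_sub_tanh : Antitone fun x => log (1 - tanh x) := fun _ _ hxy =>
  log_le_log (one_sub_tanh_pos _) (by linarith [strictMono_tanh.monotone hxy])

theorem log_one_add_tanh_sub_log_one_sub_tanh (x : ℝ) :
    log (1 + tanh x) - log (1 - tanh x) = 2 * x := by
  have h := artanh_eq_half_log ⟨(neg_one_lt_tanh x).le, (tanh_lt_one x).le⟩
  rw [artanh_tanh, log_div (one_add_tanh_pos x).ne' (one_sub_tanh_pos x).ne'] at h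
  linarith

end Real

/-- For all real `a, b`:
`|log((1+tanh(a/2))/(1+tanh(b/2)))| + |log((1-tanh(a/2))/(1-tanh(b/2)))| ≤ |a - b|`. -/
theorem stmt_3 (a b : ℝ) :
    |Real.log ((1 + Real.tanh (a / 2)) / (1 + Real.tanh (b / 2)))| +
      |Real.log ((1 - Real.tanh (a / 2)) / (1 - Real.tanh (b / 2)))| ≤ |a - b| := by
  have hhalf : Monotone fun z : ℝ => z / 2 := fun _ _ h => by linarith
  have key := abs_sub_add_abs_sub_of_monotone_of_antitone
    (monotone_log_one_add_tanh.comp hhalf) (antitone_log_one_sub_tanh.comp_monotone hhalf) a b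
  simp only [Function.comp_apply, log_one_add_tanh_sub_log_one_sub_tanh] at key
  rw [log_div (one_add_tanh_pos _).ne' (one_add_tanh_pos _).ne',
    log_div (one_sub_tanh_pos _).ne' (one_sub_tanh_pos _).ne', key]
  exact le_of_eq (by ring_nf)
end

section
/- Let η be a real-valued random variable whose distribution is symmetric (η and -η are identically distributed), and let s, s' be independent uniform random signs in {±1}, independent of η. Then the random variables s·log((1 - s·tanh(η/2))/2) and s·log((1 + s'·tanh(η/2))/2) are identically distributed. -/
open MeasureTheory ProbabilityTheory Real

/-!
With `g (x, a) = a * log ((1 - a * tanh (x / 2)) / 2)` the left side is `g (η, s)`, and as `tanh`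
is odd the right side is `g (-(s * s') * η, s)` wherever `s, s' = ±1`. Multiplying a symmetric
variable by a `±1`-valued function of a variable `X` independent of it leaves the joint law with
`X` unchanged: on every fibre `{X = b}` of the product law the factor is a fixed sign, under which
the law of `η` is invariant. Hence `(-(s * s') * η, s)` and `(η, s)` are identically distributed.
-/

@[fun_prop]
lemma Real.measurable_tanh : Measurable tanh := by
  rw [show tanh = fun x => sinh x / cosh x from funext tanh_eq_sinh_div_cosh]
  exact measurable_sinh.div measurable_cosh

lemma ae_eq_one_or_neg_one_of_map_eq {Ω : Type*} [MeasurableSpace Ω] {μ : Measure Ω}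
    {s : Ω → ℝ} (hs : Measurable s) {a b : ENNReal}
    (hlaw : μ.map s = a • Measure.dirac 1 + b • Measure.dirac (-1)) :
    ∀ᵐ ω ∂μ, s ω = 1 ∨ s ω = -1 := by
  have hset : MeasurableSet {x : ℝ | x = 1 ∨ x = -1} :=
    (measurableSet_singleton 1).union (measurableSet_singleton (-1))
  refine ae_of_ae_map (p := fun x => x = 1 ∨ x = -1) hs.aemeasurable ?_
  rw [hlaw, ae_add_measure_iff]
  exact ⟨Measure.ae_smul_measure ((ae_dirac_iff hset).2 (Or.inl rfl)) a,
    Measure.ae_smul_measure ((ae_dirac_iff hset).2 (Or.inr rfl)) b⟩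

namespace MeasureTheory.Measure

lemma measure_preimage_sign_mul {ν : Measure ℝ} (hν : ν.map Neg.neg = ν) {c : ℝ}
    (hc : c = 1 ∨ c = -1) {A : Set ℝ} (hA : MeasurableSet A) : ν ((c * ·) ⁻¹' A) = ν A := by
  rcases hc with rfl | rfl
  · simp
  · simpa [map_apply measurable_neg hA] using congrArg (· A) hν

lemma map_sign_mul_prod_eq {β : Type*} [MeasurableSpace β] {ν : Measure ℝ}
    {ρ : Measure β} [SigmaFinite ν] [SigmaFinite ρ] (hν : ν.map Neg.neg = ν)
    {ε : β → ℝ} (hε : Measurable ε) (hε_sign : ∀ᵐ b ∂ρ, ε b = 1 ∨ ε b = -1) :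
    (ν.prod ρ).map (fun p => (ε p.2 * p.1, p.2)) = ν.prod ρ := by
  classical
  set T : ℝ × β → ℝ × β := fun p => (ε p.2 * p.1, p.2)
  have hT : Measurable T := by fun_prop
  refine (prod_eq fun A B hA hB => ?_).symm
  have hfibre : ∀ b, (fun x => (x, b)) ⁻¹' (T ⁻¹' A ×ˢ B)
      = if b ∈ B then (ε b * ·) ⁻¹' A else ∅ := by
    intro b
    split_ifs <;> ext x <;> simp [T, *]
  have hfibre_measure : ∀ᵐ b ∂ρ, ν ((fun x => (x, b)) ⁻¹' (T ⁻¹' A ×ˢ B))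
      = B.indicator (fun _ => ν A) b := by
    filter_upwards [hε_sign] with b hb
    rw [hfibre]
    split_ifs with hbB
    · rw [Set.indicator_of_mem hbB, measure_preimage_sign_mul hν hb hA]
    · rw [Set.indicator_of_notMem hbB, measure_empty]
  rw [map_apply hT (hA.prod hB), prod_apply_symm (hT (hA.prod hB)),
    lintegral_congr_ae hfibre_measure, lintegral_indicator_const hB]

end MeasureTheory.Measure

lemma map_sign_mul_prodMk_eq {Ω β : Type*} [MeasurableSpace Ω] [MeasurableSpace β]
    {μ : Measure Ω} [IsFiniteMeasure μ] {η : Ω → ℝ} {X : Ω → β} (hη : Measurable η)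
    (hX : Measurable X) (hsym : μ.map η = μ.map (fun ω => -η ω)) (hind : IndepFun η X μ)
    {ε : β → ℝ} (hε : Measurable ε) (hε_sign : ∀ᵐ ω ∂μ, ε (X ω) = 1 ∨ ε (X ω) = -1) :
    μ.map (fun ω => (ε (X ω) * η ω, X ω)) = μ.map (fun ω => (η ω, X ω)) := by
  have hlaw := (indepFun_iff_map_prod_eq_prod_map_map hη.aemeasurable hX.aemeasurable).1 hind
  have hν : (μ.map η).map Neg.neg = μ.map η := by
    rw [Measure.map_map measurable_neg hη, hsym]; rfl
  have hT : Measurable fun p : ℝ × β => (ε p.2 * p.1, p.2) := by fun_prop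
  have hε_sign' : ∀ᵐ b ∂μ.map X, ε b = 1 ∨ ε b = -1 :=
    (ae_map_iff hX.aemeasurable ((hε (measurableSet_singleton 1)).union
      (hε (measurableSet_singleton (-1))))).2 hε_sign
  calc μ.map (fun ω => (ε (X ω) * η ω, X ω))
      = (μ.map fun ω => (η ω, X ω)).map fun p => (ε p.2 * p.1, p.2) := by
        rw [Measure.map_map hT (hη.prodMk hX)]; rfl
    _ = μ.map (fun ω => (η ω, X ω)) := by
      rw [hlaw]; exact Measure.map_sign_mul_prod_eq hν hε hε_sign'

/-- Let `η` be a real random variable with symmetric distribution, and `s, s'` independent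
uniform random signs in `{±1}`, with `η, s, s'` mutually independent. Then
`s · log((1 - s·tanh(η/2))/2)` and `s · log((1 + s'·tanh(η/2))/2)` are identically
distributed. -/
theorem stmt_4 {Ω : Type*} [MeasurableSpace Ω] (μ : Measure Ω) [IsProbabilityMeasure μ]
    (η s s' : Ω → ℝ) (hη : Measurable η) (hs : Measurable s) (hs' : Measurable s')
    (hsym : μ.map η = μ.map (fun ω => -η ω))
    (hslaw : μ.map s = (1/2 : ENNReal) • Measure.dirac (1 : ℝ)
        + (1/2 : ENNReal) • Measure.dirac (-1 : ℝ))
    (hs'law : μ.map s' = (1/2 : ENNReal) • Measure.dirac (1 : ℝ)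
        + (1/2 : ENNReal) • Measure.dirac (-1 : ℝ))
    (hindep : iIndepFun ![η, s, s'] μ) :
    μ.map (fun ω => s ω * Real.log ((1 - s ω * Real.tanh (η ω / 2)) / 2)) =
      μ.map (fun ω => s ω * Real.log ((1 + s' ω * Real.tanh (η ω / 2)) / 2)) := by
  set X : Ω → ℝ × ℝ := fun ω => (s ω, s' ω)
  set ε : ℝ × ℝ → ℝ := fun q => -(q.1 * q.2)
  set g : ℝ × (ℝ × ℝ) → ℝ := fun p => p.2.1 * log ((1 - p.2.1 * tanh (p.1 / 2)) / 2)
  have hX : Measurable X := hs.prodMk hs'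
  have hg : Measurable g := by fun_prop
  have hind : IndepFun η X μ := by
    have hmeas : ∀ i, Measurable (![η, s, s'] i) := fun i => by fin_cases i <;> assumption
    simpa using (hindep.indepFun_prodMk hmeas 1 2 0 (by decide) (by decide)).symm
  have hsign := ae_eq_one_or_neg_one_of_map_eq hs hslaw
  have hsign' := ae_eq_one_or_neg_one_of_map_eq hs' hs'law
  have hε_sign : ∀ᵐ ω ∂μ, ε (X ω) = 1 ∨ ε (X ω) = -1 := by
    filter_upwards [hsign, hsign'] with ω h h'
    rcases h with h | h <;> rcases h' with h' | h' <;> simp [ε, X, h, h']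
  calc μ.map (fun ω => s ω * log ((1 - s ω * tanh (η ω / 2)) / 2))
      = (μ.map fun ω => (η ω, X ω)).map g := by
        rw [Measure.map_map hg (hη.prodMk hX)]; rfl
    _ = (μ.map fun ω => (ε (X ω) * η ω, X ω)).map g := by
        rw [map_sign_mul_prodMk_eq hη hX hsym hind (by fun_prop) hε_sign]
    _ = μ.map (fun ω => s ω * log ((1 + s' ω * tanh (η ω / 2)) / 2)) := by
        rw [Measure.map_map hg (by fun_prop)]
        refine Measure.map_congr ?_
        filter_upwards [hsign, hsign'] with ω h h'
        rcases h with h | h <;> rcases h' with h' | h' <;>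
          simp [g, ε, X, h, h', neg_div, tanh_neg, ← sub_eq_add_neg]
end

section
/- Let 0 < d < 2. Define the operator LL_d on the Wasserstein space W₂(ℝ) of square-integrable probability measures on ℝ by letting LL_d(ρ) be the law of ∑_{i=1}^{D} sᵢ·log((1 + sᵢ'·tanh(ηᵢ/2))/2), where D ~ Poisson(d), the sᵢ, sᵢ' are independent uniform signs, and the ηᵢ are i.i.d. with law ρ, all mutually independent. Then LL_d is a contraction with respect to the Wasserstein-2 metric: W₂(LL_d(ρ), LL_d(ρ'))² ≤ (d/2)·W₂(ρ, ρ')² for all ρ, ρ' ∈ W₂(ℝ). -/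
open MeasureTheory ProbabilityTheory Real
open scoped NNReal ENNReal

/-- `γ` is a coupling of `ρ` and `ρ'`. -/
def IsCoupling (γ : Measure (ℝ × ℝ)) (ρ ρ' : Measure ℝ) : Prop :=
  γ.map Prod.fst = ρ ∧ γ.map Prod.snd = ρ'

/-- Squared Wasserstein-2 distance between two probability measures on `ℝ`. -/
noncomputable def W2sq (ρ ρ' : Measure ℝ) : ℝ≥0∞ :=
  ⨅ (γ : Measure (ℝ × ℝ)) (_ : IsProbabilityMeasure γ) (_ : IsCoupling γ ρ ρ'),
    ∫⁻ p, ENNReal.ofReal ((p.1 - p.2) ^ 2) ∂γ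

/-- Codomain family: one `ℕ`-valued variable (the Poisson count) and, for each `n : ℕ`,
three real variables `ηₙ, sₙ, sₙ'`. -/
abbrev llCod : Unit ⊕ (ℕ × Fin 3) → Type := Sum.elim (fun _ => ℕ) (fun _ => ℝ)

def llMS : ∀ i : Unit ⊕ (ℕ × Fin 3), MeasurableSpace (llCod i)
  | Sum.inl _ => (inferInstance : MeasurableSpace ℕ)
  | Sum.inr _ => (inferInstance : MeasurableSpace ℝ)

def llFam {Ω : Type*} (D : Ω → ℕ) (η s s' : ℕ → Ω → ℝ) :
    ∀ i : Unit ⊕ (ℕ × Fin 3), Ω → llCod i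
  | Sum.inl _ => D
  | Sum.inr (n, j) => if j = 0 then η n else if j = 1 then s n else s' n

/-- The uniform distribution on the two signs `{±1} ⊆ ℝ`. -/
noncomputable def signLaw : Measure ℝ :=
  (1 / 2 : ℝ≥0∞) • Measure.dirac (1 : ℝ) + (1 / 2 : ℝ≥0∞) • Measure.dirac (-1 : ℝ)

/-- The hypothesis that, on a probability space `(Ω, P)`, `D` is Poisson(`d`), the `sₙ, sₙ'`
are uniform signs, the `ηₙ` are i.i.d. with law `ρ`, and all of them are mutually
independent; then `P.map (∑_{i<D} sᵢ · log((1 + sᵢ'·tanh(ηᵢ/2))/2))` realizes `LL_d(ρ)`. -/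
structure IsLLSetup {Ω : Type*} [MeasurableSpace Ω] (P : Measure Ω) (d : ℝ≥0)
    (ρ : Measure ℝ) (D : Ω → ℕ) (η s s' : ℕ → Ω → ℝ) : Prop where
  probMeas : IsProbabilityMeasure P
  measD : Measurable D
  measη : ∀ n, Measurable (η n)
  meass : ∀ n, Measurable (s n)
  meass' : ∀ n, Measurable (s' n)
  lawD : P.map D = (poissonPMF d).toMeasure
  lawη : ∀ n, P.map (η n) = ρ
  laws : ∀ n, P.map (s n) = signLaw
  laws' : ∀ n, P.map (s' n) = signLaw
  indep : iIndepFun (m := llMS) (llFam D η s s') P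

/-!
The output law is the compound Poisson law `∑ₙ P(D = n) • τ^{∗n}`, where `τ` is the law of one
summand `s · log((1 + s'·tanh(η/2))/2)`. A coupling `γ` of `ρ` and `ρ'` is lifted to the two
summands by using the same signs on both sides, and then to their convolution powers and compound
Poisson laws.

With `f = log ∘ sigmoid` one has `log((1 ± tanh(x/2))/2) = f(±x)` and `f(-x) = f(x) - x`; as `f` is
monotone, `(f x - f y)² + (f (-x) - f (-y))² ≤ (x - y)²`. So averaging over the inner sign `s'`
at least halves the squared distance of a pair of coupled summands, while the outer sign `s` kills
the cross terms in the square of a sum. The `n`-th convolution power therefore costs at most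
`n/2 · cost γ`, and averaging over `n ∼ Poisson(d)` gives `d/2 · cost γ`.
-/

namespace Real

@[fun_prop]
lemma continuous_tanh : Continuous tanh := by
  simp_rw [funext tanh_eq_sinh_div_cosh]
  exact continuous_sinh.div continuous_cosh fun x => (cosh_pos x).ne'

lemma one_add_tanh_half_div_two (x : ℝ) : (1 + tanh (x / 2)) / 2 = sigmoid x := by
  have hx : exp x = exp (x / 2) * exp (x / 2) := by rw [← exp_add, add_halves]
  rw [tanh_eq, sigmoid_def, exp_neg, exp_neg, hx]
  have := exp_pos (x / 2)
  field_simp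
  ring

lemma log_sigmoid_neg (x : ℝ) : log (sigmoid (-x)) = log (sigmoid x) - x := by
  rw [← sigmoid_mul_rexp_neg, log_mul (sigmoid_pos x).ne' (exp_pos _).ne', log_exp, sub_eq_add_neg]

lemma sq_sub_log_sigmoid_add_sq_sub_log_sigmoid_neg_le (x y : ℝ) :
    (log (sigmoid x) - log (sigmoid y)) ^ 2 + (log (sigmoid (-x)) - log (sigmoid (-y))) ^ 2
      ≤ (x - y) ^ 2 := by
  have hmono : Monotone fun t => log (sigmoid t) :=
    fun a b hab => log_le_log (sigmoid_pos a) (sigmoid_le hab)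
  have hopp :
      (log (sigmoid x) - log (sigmoid y)) * (log (sigmoid (-x)) - log (sigmoid (-y))) ≤ 0 := by
    rcases le_total x y with hxy | hxy
    · exact mul_nonpos_of_nonpos_of_nonneg (sub_nonpos.2 (hmono hxy))
        (sub_nonneg.2 (hmono (neg_le_neg hxy)))
    · exact mul_nonpos_of_nonneg_of_nonpos (sub_nonneg.2 (hmono hxy))
        (sub_nonpos.2 (hmono (neg_le_neg hxy)))
  rw [log_sigmoid_neg, log_sigmoid_neg] at hopp ⊢
  nlinarith

end Real

noncomputable def signedLogSigmoid (b x : ℝ) : ℝ := log ((1 + b * tanh (x / 2)) / 2)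

lemma signedLogSigmoid_one (x : ℝ) : signedLogSigmoid 1 x = log (sigmoid x) := by
  rw [signedLogSigmoid, one_mul, one_add_tanh_half_div_two]

lemma signedLogSigmoid_neg_one (x : ℝ) : signedLogSigmoid (-1) x = log (sigmoid (-x)) := by
  rw [signedLogSigmoid, neg_one_mul, ← tanh_neg, ← neg_div, one_add_tanh_half_div_two]

@[fun_prop]
lemma measurable_signedLogSigmoid : Measurable fun p : ℝ × ℝ => signedLogSigmoid p.1 p.2 := by
  unfold signedLogSigmoid; fun_prop

instance : IsProbabilityMeasure signLaw := by
  constructor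
  simp [signLaw, ENNReal.inv_two_add_inv_two]

lemma lintegral_signLaw (f : ℝ → ℝ≥0∞) : ∫⁻ a, f a ∂signLaw = 2⁻¹ * f 1 + 2⁻¹ * f (-1) := by
  simp [signLaw, lintegral_add_measure, lintegral_smul_measure]

lemma lintegral_signLaw_sq_add_mul (c e : ℝ) :
    ∫⁻ a, ENNReal.ofReal ((c + a * e) ^ 2) ∂signLaw
      = ENNReal.ofReal (c ^ 2) + ENNReal.ofReal (e ^ 2) := by
  rw [lintegral_signLaw, ← mul_add, ← ENNReal.ofReal_add (by positivity) (by positivity),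
    ← ENNReal.ofReal_add (by positivity) (by positivity),
    show (c + 1 * e) ^ 2 + (c + -1 * e) ^ 2 = 2 * (c ^ 2 + e ^ 2) by ring,
    ENNReal.ofReal_mul zero_le_two, ← mul_assoc, ENNReal.ofReal_ofNat,
    ENNReal.inv_mul_cancel two_ne_zero ENNReal.ofNat_ne_top, one_mul]

lemma lintegral_signLaw_sq_sub_signedLogSigmoid_le (x y : ℝ) :
    ∫⁻ b, ENNReal.ofReal ((signedLogSigmoid b x - signedLogSigmoid b y) ^ 2) ∂signLaw
      ≤ 2⁻¹ * ENNReal.ofReal ((x - y) ^ 2) := by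
  rw [lintegral_signLaw, ← mul_add, ← ENNReal.ofReal_add (by positivity) (by positivity),
    signedLogSigmoid_one, signedLogSigmoid_one, signedLogSigmoid_neg_one, signedLogSigmoid_neg_one]
  gcongr
  exact sq_sub_log_sigmoid_add_sq_sub_log_sigmoid_neg_le x y

set_option linter.deprecated false in
lemma poissonPMF_toMeasure (r : ℝ≥0) : (poissonPMF r).toMeasure = poissonMeasure r :=
  Measure.ext_of_singleton fun n => by
    rw [PMF.toMeasure_apply_singleton _ _ (measurableSet_singleton n), poissonMeasure_singleton]
    rfl

lemma tsum_poissonMeasure_singleton (r : ℝ≥0) : ∑' n : ℕ, poissonMeasure r {n} = 1 := by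
  simpa [mul_comm] using (lintegral_countable' (μ := poissonMeasure r) 1).symm

lemma tsum_poissonMeasure_singleton_mul_natCast (r : ℝ≥0) :
    ∑' n : ℕ, poissonMeasure r {n} * n = r := by
  have hshift : ∀ n : ℕ,
      poissonMeasure r {n + 1} * ((n + 1 : ℕ) : ℝ≥0∞) = r * poissonMeasure r {n} := by
    intro n
    rw [poissonMeasure_singleton, poissonMeasure_singleton,
      ← ENNReal.ofReal_natCast, ← ENNReal.ofReal_coe_nnreal,
      ← ENNReal.ofReal_mul (by positivity), ← ENNReal.ofReal_mul (by positivity)]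
    congr 1
    simp only [Nat.factorial_succ, pow_succ]
    push_cast
    field_simp
  rw [tsum_eq_zero_add' ENNReal.summable, Nat.cast_zero, mul_zero, zero_add, tsum_congr hshift,
    ENNReal.tsum_mul_left, tsum_poissonMeasure_singleton, mul_one]

section CompoundPoisson

variable {M : Type*} [AddMonoid M] [MeasurableSpace M]

noncomputable def convPow (τ : Measure M) : ℕ → Measure M
  | 0 => Measure.dirac 0
  | n + 1 => convPow τ n ∗ τ

noncomputable def compoundPoisson (r : ℝ≥0) (τ : Measure M) : Measure M :=
  Measure.sum fun n => poissonMeasure r {n} • convPow τ n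

lemma lintegral_compoundPoisson (r : ℝ≥0) (τ : Measure M) (f : M → ℝ≥0∞) :
    ∫⁻ x, f x ∂compoundPoisson r τ = ∑' n, poissonMeasure r {n} * ∫⁻ x, f x ∂convPow τ n := by
  simp [compoundPoisson, lintegral_sum_measure, lintegral_smul_measure]

variable [MeasurableAdd₂ M] {M' : Type*} [AddMonoid M'] [MeasurableSpace M'] [MeasurableAdd₂ M']

instance isProbabilityMeasure_convPow (τ : Measure M) [IsProbabilityMeasure τ] (n : ℕ) :
    IsProbabilityMeasure (convPow τ n) := by
  induction n with
  | zero => rw [convPow]; infer_instance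
  | succ n ih => rw [convPow]; infer_instance

instance isProbabilityMeasure_compoundPoisson (r : ℝ≥0) (τ : Measure M)
    [IsProbabilityMeasure τ] : IsProbabilityMeasure (compoundPoisson r τ) := by
  constructor
  simp [compoundPoisson, Measure.sum_apply _ MeasurableSet.univ, tsum_poissonMeasure_singleton]

lemma map_convPow (τ : Measure M) [IsProbabilityMeasure τ] (L : M →+ M') (hL : Measurable L)
    (n : ℕ) : (convPow τ n).map L = convPow (τ.map L) n := by
  induction n with
  | zero => simp [convPow, Measure.map_dirac' hL]
  | succ n ih => rw [convPow, convPow, Measure.map_conv_addMonoidHom L hL, ih]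

lemma map_compoundPoisson (r : ℝ≥0) (τ : Measure M) [IsProbabilityMeasure τ] (L : M →+ M')
    (hL : Measurable L) : (compoundPoisson r τ).map L = compoundPoisson r (τ.map L) := by
  simp [compoundPoisson, Measure.map_sum hL.aemeasurable, Measure.map_smul, map_convPow τ L hL]

end CompoundPoisson

noncomputable def sqCost (γ : Measure (ℝ × ℝ)) : ℝ≥0∞ :=
  ∫⁻ p, ENNReal.ofReal ((p.1 - p.2) ^ 2) ∂γ

lemma W2sq_le_sqCost {γ : Measure (ℝ × ℝ)} [IsProbabilityMeasure γ] {ρ ρ' : Measure ℝ}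
    (hγ : IsCoupling γ ρ ρ') : W2sq ρ ρ' ≤ sqCost γ :=
  iInf₂_le_of_le γ ‹_› (iInf_le _ hγ)

lemma isCoupling_prod (ρ ρ' : Measure ℝ) [IsProbabilityMeasure ρ] [IsProbabilityMeasure ρ'] :
    IsCoupling (ρ.prod ρ') ρ ρ' :=
  ⟨by simp [Measure.map_fst_prod], by simp [Measure.map_snd_prod]⟩

lemma W2sq_le_mul_of_forall_isCoupling {μ μ' ρ ρ' : Measure ℝ} [IsProbabilityMeasure ρ]
    [IsProbabilityMeasure ρ'] {c : ℝ≥0∞} (hc : c ≠ ⊤)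
    (h : ∀ γ, IsProbabilityMeasure γ → IsCoupling γ ρ ρ' → W2sq μ μ' ≤ c * sqCost γ) :
    W2sq μ μ' ≤ c * W2sq ρ ρ' := by
  rcases eq_or_ne c 0 with rfl | hc0
  · simpa using h _ inferInstance (isCoupling_prod ρ ρ')
  simp_rw [W2sq, ENNReal.mul_iInf_of_ne hc0 hc]
  exact le_iInf₂ fun γ hγ => le_iInf (h γ hγ)

noncomputable def incrementLaw (μ : Measure ℝ) : Measure ℝ :=
  ((μ.prod signLaw).prod signLaw).map fun q => q.2 * signedLogSigmoid q.1.2 q.1.1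

noncomputable def incrementCoupling (γ : Measure (ℝ × ℝ)) : Measure (ℝ × ℝ) :=
  ((γ.prod signLaw).prod signLaw).map fun q =>
    (q.2 * signedLogSigmoid q.1.2 q.1.1.1, q.2 * signedLogSigmoid q.1.2 q.1.1.2)

instance (μ : Measure ℝ) [IsProbabilityMeasure μ] : IsProbabilityMeasure (incrementLaw μ) :=
  Measure.isProbabilityMeasure_map (by fun_prop)

instance (γ : Measure (ℝ × ℝ)) [IsProbabilityMeasure γ] :
    IsProbabilityMeasure (incrementCoupling γ) :=
  Measure.isProbabilityMeasure_map (by fun_prop)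

lemma map_prod_signLaw_prod_signLaw {α β : Type*} [MeasurableSpace α] [MeasurableSpace β]
    (μ : Measure α) [SFinite μ] {f : α → β} (hf : Measurable f) :
    ((μ.map f).prod signLaw).prod signLaw
      = ((μ.prod signLaw).prod signLaw).map (Prod.map (Prod.map f id) id) := by
  rw [← Measure.map_prod_map _ _ (hf.prodMap measurable_id) measurable_id,
    ← Measure.map_prod_map _ _ hf measurable_id, Measure.map_id]

lemma map_fst_incrementCoupling (γ : Measure (ℝ × ℝ)) [IsProbabilityMeasure γ] :
    (incrementCoupling γ).map Prod.fst = incrementLaw (γ.map Prod.fst) := by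
  rw [incrementLaw, map_prod_signLaw_prod_signLaw γ measurable_fst, incrementCoupling,
    Measure.map_map measurable_fst (by fun_prop), Measure.map_map (by fun_prop) (by fun_prop)]
  rfl

lemma map_snd_incrementCoupling (γ : Measure (ℝ × ℝ)) [IsProbabilityMeasure γ] :
    (incrementCoupling γ).map Prod.snd = incrementLaw (γ.map Prod.snd) := by
  rw [incrementLaw, map_prod_signLaw_prod_signLaw γ measurable_snd, incrementCoupling,
    Measure.map_map measurable_snd (by fun_prop), Measure.map_map (by fun_prop) (by fun_prop)]
  rfl

lemma isCoupling_compoundPoisson_incrementCoupling (r : ℝ≥0) {γ : Measure (ℝ × ℝ)}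
    [IsProbabilityMeasure γ] {ρ ρ' : Measure ℝ} (hγ : IsCoupling γ ρ ρ') :
    IsCoupling (compoundPoisson r (incrementCoupling γ))
      (compoundPoisson r (incrementLaw ρ)) (compoundPoisson r (incrementLaw ρ')) := by
  constructor
  · have := map_compoundPoisson r (incrementCoupling γ) (AddMonoidHom.fst ℝ ℝ) measurable_fst
    rw [AddMonoidHom.coe_fst] at this
    rw [this, map_fst_incrementCoupling, hγ.1]
  · have := map_compoundPoisson r (incrementCoupling γ) (AddMonoidHom.snd ℝ ℝ) measurable_snd
    rw [AddMonoidHom.coe_snd] at this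
    rw [this, map_snd_incrementCoupling, hγ.2]

lemma lintegral_incrementCoupling_sq_add_le (γ : Measure (ℝ × ℝ)) [IsProbabilityMeasure γ]
    (c : ℝ) :
    ∫⁻ q, ENNReal.ofReal ((c + (q.1 - q.2)) ^ 2) ∂incrementCoupling γ
      ≤ ENNReal.ofReal (c ^ 2) + 2⁻¹ * sqCost γ := by
  rw [incrementCoupling, lintegral_map (by fun_prop) (by fun_prop),
    lintegral_prod _ (by fun_prop)]
  simp_rw [← mul_sub, lintegral_signLaw_sq_add_mul]
  rw [lintegral_add_left measurable_const, lintegral_const, measure_univ, mul_one,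
    lintegral_prod _ (by fun_prop)]
  gcongr
  calc ∫⁻ xy, ∫⁻ b, ENNReal.ofReal ((signedLogSigmoid b xy.1 - signedLogSigmoid b xy.2) ^ 2)
          ∂signLaw ∂γ
      ≤ ∫⁻ xy, 2⁻¹ * ENNReal.ofReal ((xy.1 - xy.2) ^ 2) ∂γ :=
        lintegral_mono fun xy => lintegral_signLaw_sq_sub_signedLogSigmoid_le xy.1 xy.2
    _ = 2⁻¹ * sqCost γ := lintegral_const_mul _ (by fun_prop)

lemma sqCost_conv_incrementCoupling_le (ν γ : Measure (ℝ × ℝ)) [IsProbabilityMeasure ν]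
    [IsProbabilityMeasure γ] :
    sqCost (ν ∗ incrementCoupling γ) ≤ sqCost ν + 2⁻¹ * sqCost γ := by
  rw [sqCost, Measure.lintegral_conv (by fun_prop)]
  simp_rw [Prod.fst_add, Prod.snd_add, add_sub_add_comm]
  calc ∫⁻ p, ∫⁻ q, ENNReal.ofReal ((p.1 - p.2 + (q.1 - q.2)) ^ 2) ∂incrementCoupling γ ∂ν
      ≤ ∫⁻ p, ENNReal.ofReal ((p.1 - p.2) ^ 2) + 2⁻¹ * sqCost γ ∂ν :=
        lintegral_mono fun p => lintegral_incrementCoupling_sq_add_le γ _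
    _ = sqCost ν + 2⁻¹ * sqCost γ := by
        rw [lintegral_add_right _ measurable_const, lintegral_const, measure_univ, mul_one]
        rfl

lemma sqCost_convPow_incrementCoupling_le (γ : Measure (ℝ × ℝ)) [IsProbabilityMeasure γ]
    (n : ℕ) : sqCost (convPow (incrementCoupling γ) n) ≤ n * (2⁻¹ * sqCost γ) := by
  induction n with
  | zero => simp [convPow, sqCost]
  | succ n ih =>
    calc sqCost (convPow (incrementCoupling γ) (n + 1))
        ≤ sqCost (convPow (incrementCoupling γ) n) + 2⁻¹ * sqCost γ :=
          sqCost_conv_incrementCoupling_le _ γ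
      _ ≤ (n + 1 : ℕ) * (2⁻¹ * sqCost γ) := by
          rw [Nat.cast_succ, add_mul, one_mul]
          gcongr

lemma sqCost_compoundPoisson_incrementCoupling_le (r : ℝ≥0) (γ : Measure (ℝ × ℝ))
    [IsProbabilityMeasure γ] :
    sqCost (compoundPoisson r (incrementCoupling γ)) ≤ r * (2⁻¹ * sqCost γ) := by
  rw [sqCost, lintegral_compoundPoisson]
  calc ∑' n, poissonMeasure r {n} * sqCost (convPow (incrementCoupling γ) n)
      ≤ ∑' n : ℕ, poissonMeasure r {n} * (n * (2⁻¹ * sqCost γ)) :=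
        ENNReal.tsum_le_tsum fun n => by gcongr; exact sqCost_convPow_incrementCoupling_le γ n
    _ = (∑' n : ℕ, poissonMeasure r {n} * n) * (2⁻¹ * sqCost γ) := by
        rw [← ENNReal.tsum_mul_right]
        simp only [mul_assoc]
    _ = r * (2⁻¹ * sqCost γ) := by rw [tsum_poissonMeasure_singleton_mul_natCast]

section IndepOfBlocks

variable {Ω ι : Type*} {mΩ : MeasurableSpace Ω} {μ : Measure Ω} {β : ι → Type*}
  {m : ∀ i, MeasurableSpace (β i)} {f : ∀ i, Ω → β i}

lemma measurable_biSup_comap {S : Set ι} {i : ι} (hi : i ∈ S) :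
    Measurable[⨆ j ∈ S, (m j).comap (f j)] (f i) :=
  Measurable.of_comap_le (le_iSup₂_of_le (f := fun j _ => (m j).comap (f j)) i hi le_rfl)

lemma ProbabilityTheory.iIndepFun.indepFun_of_measurable_biSup (hf : iIndepFun f μ)
    (hmeas : ∀ i, Measurable (f i)) {S T : Set ι} (hST : Disjoint S T) {α γ : Type*}
    [MeasurableSpace α] [MeasurableSpace γ] {X : Ω → α} {Y : Ω → γ}
    (hX : Measurable[⨆ i ∈ S, (m i).comap (f i)] X)
    (hY : Measurable[⨆ i ∈ T, (m i).comap (f i)] Y) : IndepFun X Y μ := by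
  rw [IndepFun_iff_Indep]
  exact indep_of_indep_of_le_right
    (indep_of_indep_of_le_left
      (indep_iSup_of_disjoint (fun i => (hmeas i).comap_le) hf.iIndep hST) hX.comap_le)
    hY.comap_le

end IndepOfBlocks

lemma map_eval_eq_sum_of_indepFun {Ω β : Type*} [MeasurableSpace Ω] [MeasurableSpace β]
    {P : Measure Ω} {N : Ω → ℕ} {Y : ℕ → Ω → β} (hN : Measurable N) (hY : ∀ n, Measurable (Y n))
    (hind : ∀ n, IndepFun N (Y n) P) :
    P.map (fun ω => Y (N ω) ω) = Measure.sum fun n => P.map N {n} • P.map (Y n) := by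
  have hpre : ∀ A, (fun ω => Y (N ω) ω) ⁻¹' A = ⋃ n, N ⁻¹' {n} ∩ Y n ⁻¹' A := by
    intro A; ext ω; simp
  have hmeas : Measurable fun ω => Y (N ω) ω := fun A hA => by
    rw [hpre]
    exact .iUnion fun n => (hN (measurableSet_singleton n)).inter (hY n hA)
  ext1 A hA
  rw [Measure.map_apply hmeas hA, hpre, measure_iUnion, Measure.sum_apply _ hA]
  · refine tsum_congr fun n => ?_
    rw [(hind n).measure_inter_preimage_eq_mul _ _ (measurableSet_singleton n) hA,
      Measure.smul_apply, smul_eq_mul, Measure.map_apply hN (measurableSet_singleton n),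
      Measure.map_apply (hY n) hA]
  · exact fun m n hmn => Disjoint.mono Set.inter_subset_left Set.inter_subset_left
      ((Set.disjoint_singleton.2 hmn).preimage N)
  · exact fun n => (hN (measurableSet_singleton n)).inter (hY n hA)

noncomputable def llIncrement {Ω : Type*} (η s s' : ℕ → Ω → ℝ) (k : ℕ) : Ω → ℝ :=
  fun ω => s k ω * signedLogSigmoid (s' k ω) (η k ω)

noncomputable def llPartialSum {Ω : Type*} (η s s' : ℕ → Ω → ℝ) (n : ℕ) : Ω → ℝ :=
  fun ω => ∑ k ∈ Finset.range n, llIncrement η s s' k ω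

lemma llPartialSum_succ {Ω : Type*} (η s s' : ℕ → Ω → ℝ) (n : ℕ) :
    llPartialSum η s s' (n + 1) = llPartialSum η s s' n + llIncrement η s s' n := by
  ext ω
  simp [llPartialSum, Finset.sum_range_succ]

lemma measurable_llIncrement_of_mem {Ω : Type*} {D : Ω → ℕ} {η s s' : ℕ → Ω → ℝ}
    {S : Set (Unit ⊕ ℕ × Fin 3)} {k : ℕ} (hk : ∀ j, Sum.inr (k, j) ∈ S) :
    Measurable[⨆ i ∈ S, (llMS i).comap (llFam D η s s' i)] (llIncrement η s s' k) := by
  have hη : Measurable[⨆ i ∈ S, (llMS i).comap (llFam D η s s' i)] (η k) :=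
    measurable_biSup_comap (f := llFam D η s s') (hk 0)
  have hs : Measurable[⨆ i ∈ S, (llMS i).comap (llFam D η s s' i)] (s k) :=
    measurable_biSup_comap (f := llFam D η s s') (hk 1)
  have hs' : Measurable[⨆ i ∈ S, (llMS i).comap (llFam D η s s' i)] (s' k) :=
    measurable_biSup_comap (f := llFam D η s s') (hk 2)
  exact hs.mul (measurable_signedLogSigmoid.comp (hs'.prodMk hη))

namespace IsLLSetup

variable {Ω : Type*} [MeasurableSpace Ω] {P : Measure Ω} {d : ℝ≥0} {ρ : Measure ℝ}
  {D : Ω → ℕ} {η s s' : ℕ → Ω → ℝ}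

lemma measurable_llFam (hset : IsLLSetup P d ρ D η s s') :
    ∀ i, @Measurable _ _ _ (llMS i) (llFam D η s s' i)
  | Sum.inl _ => hset.measD
  | Sum.inr (n, j) => by
    fin_cases j <;> [exact hset.measη n; exact hset.meass n; exact hset.meass' n]

lemma measurable_llIncrement (hset : IsLLSetup P d ρ D η s s') (k : ℕ) :
    Measurable (llIncrement η s s' k) :=
  (hset.meass k).mul (measurable_signedLogSigmoid.comp ((hset.meass' k).prodMk (hset.measη k)))

lemma measurable_llPartialSum (hset : IsLLSetup P d ρ D η s s') (n : ℕ) :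
    Measurable (llPartialSum η s s' n) :=
  Finset.measurable_sum _ fun k _ => hset.measurable_llIncrement k

lemma indepFun_count_llPartialSum (hset : IsLLSetup P d ρ D η s s') (n : ℕ) :
    IndepFun D (llPartialSum η s s' n) P :=
  hset.indep.indepFun_of_measurable_biSup hset.measurable_llFam
    (S := {Sum.inl ()}) (T := Set.range Sum.inr) (by simp)
    (measurable_biSup_comap (m := llMS) (f := llFam D η s s') (Set.mem_singleton (Sum.inl ())))
    (Finset.measurable_sum _ fun k _ =>
      measurable_llIncrement_of_mem fun j => Set.mem_range_self (k, j))

lemma indepFun_llPartialSum_llIncrement (hset : IsLLSetup P d ρ D η s s') (n : ℕ) :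
    IndepFun (llPartialSum η s s' n) (llIncrement η s s' n) P :=
  hset.indep.indepFun_of_measurable_biSup hset.measurable_llFam
    (S := Sum.inr '' (Set.Iio n ×ˢ Set.univ)) (T := Sum.inr '' ({n} ×ˢ Set.univ))
    (by simp only [Set.disjoint_left]; aesop)
    (Finset.measurable_sum _ fun k hk =>
      measurable_llIncrement_of_mem fun j => ⟨(k, j), by simpa using hk, rfl⟩)
    (measurable_llIncrement_of_mem fun j => ⟨(n, j), by simp, rfl⟩)

lemma map_llIncrement (hset : IsLLSetup P d ρ D η s s') (n : ℕ) :
    P.map (llIncrement η s s' n) = incrementLaw ρ := by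
  have := hset.probMeas
  have hpair : P.map (fun ω => (η n ω, s' n ω)) = ρ.prod signLaw := by
    rw [← hset.lawη n, ← hset.laws' n]
    exact (hset.indep.indepFun (i := Sum.inr (n, 0)) (j := Sum.inr (n, 2)) (by simp))
      |>.map_prod_eq_prod_map_map (hset.measη n).aemeasurable (hset.meass' n).aemeasurable
  have htriple : P.map (fun ω => ((η n ω, s' n ω), s n ω)) = (ρ.prod signLaw).prod signLaw := by
    rw [← hpair, ← hset.laws n]
    exact (hset.indep.indepFun_prodMk hset.measurable_llFam (Sum.inr (n, 0)) (Sum.inr (n, 2))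
      (Sum.inr (n, 1)) (by simp) (by simp)).map_prod_eq_prod_map_map
      ((hset.measη n).prodMk (hset.meass' n)).aemeasurable (hset.meass n).aemeasurable
  rw [incrementLaw, ← htriple, Measure.map_map (by fun_prop)
    (((hset.measη n).prodMk (hset.meass' n)).prodMk (hset.meass n))]
  rfl

lemma map_llPartialSum (hset : IsLLSetup P d ρ D η s s') (n : ℕ) :
    P.map (llPartialSum η s s' n) = convPow (incrementLaw ρ) n := by
  have := hset.probMeas
  induction n with
  | zero =>
    rw [show llPartialSum η s s' 0 = fun _ => 0 from funext fun _ => Finset.sum_range_zero _,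
      Measure.map_const]
    simp [convPow]
  | succ n ih =>
    rw [llPartialSum_succ, (hset.indepFun_llPartialSum_llIncrement n).map_add_eq_map_conv_map
      (hset.measurable_llPartialSum n) (hset.measurable_llIncrement n), ih, hset.map_llIncrement,
      convPow]

lemma map_eq_compoundPoisson (hset : IsLLSetup P d ρ D η s s') :
    P.map (fun ω => ∑ i ∈ Finset.range (D ω),
      s i ω * Real.log ((1 + s' i ω * Real.tanh (η i ω / 2)) / 2))
      = compoundPoisson d (incrementLaw ρ) := by
  have hsum : (fun ω => ∑ i ∈ Finset.range (D ω),
      s i ω * Real.log ((1 + s' i ω * Real.tanh (η i ω / 2)) / 2))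
      = fun ω => llPartialSum η s s' (D ω) ω := rfl
  rw [hsum, map_eval_eq_sum_of_indepFun hset.measD hset.measurable_llPartialSum
    hset.indepFun_count_llPartialSum, hset.lawD, poissonPMF_toMeasure]
  simp_rw [hset.map_llPartialSum]
  rfl

end IsLLSetup

theorem stmt_8_general (d : ℝ≥0)
    (ρ ρ' : Measure ℝ) [IsProbabilityMeasure ρ] [IsProbabilityMeasure ρ']
    {Ω Ω' : Type*} [MeasurableSpace Ω] [MeasurableSpace Ω']
    (P : Measure Ω) (P' : Measure Ω')
    (D : Ω → ℕ) (η s s' : ℕ → Ω → ℝ) (D' : Ω' → ℕ) (η' t t' : ℕ → Ω' → ℝ)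
    (hset : IsLLSetup P d ρ D η s s') (hset' : IsLLSetup P' d ρ' D' η' t t') :
    W2sq
      (P.map (fun ω => ∑ i ∈ Finset.range (D ω),
        s i ω * Real.log ((1 + s' i ω * Real.tanh (η i ω / 2)) / 2)))
      (P'.map (fun ω => ∑ i ∈ Finset.range (D' ω),
        t i ω * Real.log ((1 + t' i ω * Real.tanh (η' i ω / 2)) / 2))) ≤
      ((d : ℝ≥0∞) / 2) * W2sq ρ ρ' := by
  rw [hset.map_eq_compoundPoisson, hset'.map_eq_compoundPoisson]
  refine W2sq_le_mul_of_forall_isCoupling (ENNReal.div_ne_top ENNReal.coe_ne_top two_ne_zero)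
    fun γ _ hγ => ?_
  calc _ ≤ sqCost (compoundPoisson d (incrementCoupling γ)) :=
        W2sq_le_sqCost (isCoupling_compoundPoisson_incrementCoupling d hγ)
    _ ≤ d * (2⁻¹ * sqCost γ) := sqCost_compoundPoisson_incrementCoupling_le d γ
    _ = d / 2 * sqCost γ := by rw [← mul_assoc, ENNReal.div_eq_inv_mul, mul_comm (2⁻¹ : ℝ≥0∞)]

/-- For `0 < d < 2`, the operator `LL_d` is a contraction on the Wasserstein space
`W₂(ℝ)`: `W₂(LL_d ρ, LL_d ρ')² ≤ (d/2)·W₂(ρ, ρ')²`. -/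
theorem stmt_8 (d : ℝ≥0) (hd0 : 0 < d) (hd2 : (d : ℝ) < 2)
    (ρ ρ' : Measure ℝ) [IsProbabilityMeasure ρ] [IsProbabilityMeasure ρ']
    (hρ : ∫⁻ x, ENNReal.ofReal (x ^ 2) ∂ρ < ∞)
    (hρ' : ∫⁻ x, ENNReal.ofReal (x ^ 2) ∂ρ' < ∞)
    {Ω Ω' : Type*} [MeasurableSpace Ω] [MeasurableSpace Ω']
    (P : Measure Ω) (P' : Measure Ω')
    (D : Ω → ℕ) (η s s' : ℕ → Ω → ℝ) (D' : Ω' → ℕ) (η' t t' : ℕ → Ω' → ℝ)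
    (hset : IsLLSetup P d ρ D η s s') (hset' : IsLLSetup P' d ρ' D' η' t t') :
    W2sq
      (P.map (fun ω => ∑ i ∈ Finset.range (D ω),
        s i ω * Real.log ((1 + s' i ω * Real.tanh (η i ω / 2)) / 2)))
      (P'.map (fun ω => ∑ i ∈ Finset.range (D' ω),
        t i ω * Real.log ((1 + t' i ω * Real.tanh (η' i ω / 2)) / 2))) ≤
      ((d : ℝ≥0∞) / 2) * W2sq ρ ρ' :=
  stmt_8_general d ρ ρ' P P' D η s s' D' η' t t' hset hset'
end

section
/- Let Φ be a 2-SAT formula (a finite set of clauses, each a disjunction of two literals over variables x₁,...,xₙ), let Y be a set of variables and χ : Y → {±1} an assignment. Run Unit Clause Propagation from χ: iteratively, whenever some clause has exactly one of its variables assigned a value that fails to satisfy it, assign the other variable the value satisfying the clause. Let I_χ be the set of all variables assigned a value upon termination (including Y) if no contradiction (a clause with both variables assigned failing values) arises, and let I_χ have size n otherwise; write Z(Φ) for the number of satisfying assignments and Z(Φ,χ) for the number of satisfying assignments extending χ. Then Z(Φ) ≤ 2^{|I_χ|}·max(Z(Φ,χ), 1). -/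
open scoped Classical

/-- A 2-SAT clause over variables `x₀, …, x_{n-1}`: a disjunction of the literal of
variable `v` with sign `sv` and the literal of variable `w` with sign `sw`
(sign `true` = positive occurrence). -/
structure Clause (n : ℕ) where
  v : Fin n
  sv : Bool
  w : Fin n
  sw : Bool

/-- `σ` satisfies the clause `c`. -/
def ClauseSat {n : ℕ} (σ : Fin n → Bool) (c : Clause n) : Prop :=
  σ c.v = c.sv ∨ σ c.w = c.sw

/-- `σ` satisfies the whole formula `Φ`. -/
def Sat {n : ℕ} (Φ : Finset (Clause n)) (σ : Fin n → Bool) : Prop :=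
  ∀ c ∈ Φ, ClauseSat σ c

/-- The (variable, value) pairs derived by Unit Clause Propagation from the initial
assignment `χ` on `Y`: whenever a clause has one variable assigned the value failing to
satisfy it, the other variable is assigned the value satisfying the clause. -/
inductive Derived {n : ℕ} (Φ : Finset (Clause n)) (Y : Finset (Fin n))
    (χ : Fin n → Bool) : Fin n → Bool → Prop
  | base {x : Fin n} : x ∈ Y → Derived Φ Y χ x (χ x)
  | fwd {c : Clause n} : c ∈ Φ → Derived Φ Y χ c.v (!c.sv) → Derived Φ Y χ c.w c.sw
  | bwd {c : Clause n} : c ∈ Φ → Derived Φ Y χ c.w (!c.sw) → Derived Φ Y χ c.v c.sv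

/-- Unit Clause Propagation runs into a contradiction: some clause has both of its
variables assigned failing values. -/
def UCPContra {n : ℕ} (Φ : Finset (Clause n)) (Y : Finset (Fin n))
    (χ : Fin n → Bool) : Prop :=
  ∃ c ∈ Φ, Derived Φ Y χ c.v (!c.sv) ∧ Derived Φ Y χ c.w (!c.sw)

/-- The number `|I_χ|`: the number of variables assigned a value upon termination of Unit
Clause Propagation (including `Y`), declared to be `n` if a contradiction arises. -/
noncomputable def UCPsize {n : ℕ} (Φ : Finset (Clause n)) (Y : Finset (Fin n))
    (χ : Fin n → Bool) : ℕ :=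
  if UCPContra Φ Y χ then n else Set.ncard {x : Fin n | ∃ b, Derived Φ Y χ x b}

/-- `Z(Φ)`: the number of satisfying assignments of `Φ`. -/
noncomputable def Z {n : ℕ} (Φ : Finset (Clause n)) : ℕ :=
  Set.ncard {σ : Fin n → Bool | Sat Φ σ}

/-- `Z(Φ,χ)`: the number of satisfying assignments of `Φ` extending `χ : Y → {±1}`. -/
noncomputable def Zext {n : ℕ} (Φ : Finset (Clause n)) (Y : Finset (Fin n))
    (χ : Fin n → Bool) : ℕ :=
  Set.ncard {σ : Fin n → Bool | Sat Φ σ ∧ ∀ y ∈ Y, σ y = χ y}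

/-! Uniqueness of the propagated values is exactly the absence of a contradiction, so once
propagation succeeds it defines a partial assignment `χ*` on `I_χ`. Overwriting a satisfying
assignment by `χ*` keeps it satisfying: a clause meeting `I_χ` is either satisfied by `χ*` or
forces the value of its other variable, which `χ*` then carries. The overwrite map sends the
satisfying assignments into those extending `χ`, and together with the restriction to `I_χ` it
is injective, whence `Z(Φ) ≤ 2^{|I_χ|} Z(Φ,χ)`. -/

theorem Set.ncard_le_ncard_mul_pow_of_mapsTo {ι β : Type*} [Finite ι] [Finite β]
    {S T : Set (ι → β)} {I : Set ι} {F : (ι → β) → ι → β} (hmaps : Set.MapsTo F S T)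
    (hF : ∀ σ, ∀ x ∉ I, F σ x = σ x) :
    S.ncard ≤ T.ncard * Nat.card β ^ I.ncard := by
  have hinj : Set.InjOn (fun σ => (F σ, fun x : I => σ x)) S := by
    intro σ₁ _ σ₂ _ heq
    simp only [Prod.mk.injEq] at heq
    funext x
    by_cases hx : x ∈ I
    · exact congrFun heq.2 ⟨x, hx⟩
    · simpa only [hF _ x hx] using congrFun heq.1 x
  calc S.ncard ≤ (T ×ˢ (Set.univ : Set (I → β))).ncard :=
        Set.ncard_le_ncard_of_injOn _ (fun σ hσ => ⟨hmaps hσ, trivial⟩) hinj (Set.toFinite _)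
    _ = T.ncard * Nat.card β ^ I.ncard := by
        rw [Set.ncard_prod, Set.ncard_univ, Nat.card_fun, Nat.card_coe_set_eq]

section UnitPropagation

variable {n : ℕ} {Φ : Finset (Clause n)} {Y : Finset (Fin n)} {χ : Fin n → Bool}

theorem ucpContra_of_derived_not {x : Fin n} {b : Bool} (h₁ : Derived Φ Y χ x b)
    (h₂ : Derived Φ Y χ x (!b)) : UCPContra Φ Y χ := by
  cases h₁ with
  | fwd hc hd => exact ⟨_, hc, hd, h₂⟩
  | bwd hc hd => exact ⟨_, hc, h₂, hd⟩
  | base hx =>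
    generalize hb : (!χ x) = b' at h₂
    cases h₂ with
    | base => simp at hb
    | @fwd c hc hd =>
      have hχ : χ c.w = !c.sw := by simp [← hb]
      exact ⟨c, hc, hd, hχ ▸ Derived.base hx⟩
    | @bwd c hc hd =>
      have hχ : χ c.v = !c.sv := by simp [← hb]
      exact ⟨c, hc, hχ ▸ Derived.base hx, hd⟩

theorem Derived.eq_of_not_ucpContra (hc : ¬UCPContra Φ Y χ) {x : Fin n} {b b' : Bool}
    (h₁ : Derived Φ Y χ x b) (h₂ : Derived Φ Y χ x b') : b' = b := by
  by_contra hne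
  exact hc (ucpContra_of_derived_not h₁ (Bool.eq_not_iff.2 hne ▸ h₂))

variable (Φ Y χ) in
noncomputable def ucpOverwrite (σ : Fin n → Bool) (x : Fin n) : Bool :=
  if h : ∃ b, Derived Φ Y χ x b then h.choose else σ x

theorem ucpOverwrite_of_not_derived (σ : Fin n → Bool) {x : Fin n}
    (hx : x ∉ {x | ∃ b, Derived Φ Y χ x b}) : ucpOverwrite Φ Y χ σ x = σ x :=
  dif_neg hx

theorem ucpOverwrite_of_derived (hc : ¬UCPContra Φ Y χ) (σ : Fin n → Bool) {x : Fin n}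
    {b : Bool} (hx : Derived Φ Y χ x b) : ucpOverwrite Φ Y χ σ x = b := by
  have h : ∃ b, Derived Φ Y χ x b := ⟨b, hx⟩
  rw [ucpOverwrite, dif_pos h]
  exact hx.eq_of_not_ucpContra hc h.choose_spec

theorem sat_ucpOverwrite (hc : ¬UCPContra Φ Y χ) {σ : Fin n → Bool} (hσ : Sat Φ σ) :
    Sat Φ (ucpOverwrite Φ Y χ σ) := by
  intro c hcΦ
  by_cases hv : ∃ b, Derived Φ Y χ c.v b
  · obtain ⟨b, hb⟩ := hv
    by_cases hsv : b = c.sv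
    · exact Or.inl (ucpOverwrite_of_derived hc σ (hsv ▸ hb))
    · exact Or.inr (ucpOverwrite_of_derived hc σ
        (Derived.fwd hcΦ (Bool.eq_not_iff.2 hsv ▸ hb)))
  by_cases hw : ∃ b, Derived Φ Y χ c.w b
  · obtain ⟨b, hb⟩ := hw
    by_cases hsw : b = c.sw
    · exact Or.inr (ucpOverwrite_of_derived hc σ (hsw ▸ hb))
    · exact absurd ⟨_, Derived.bwd hcΦ (Bool.eq_not_iff.2 hsw ▸ hb)⟩ hv
  simpa only [ClauseSat, ucpOverwrite_of_not_derived σ hv, ucpOverwrite_of_not_derived σ hw]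
    using hσ c hcΦ

theorem ucpOverwrite_mapsTo (hc : ¬UCPContra Φ Y χ) :
    Set.MapsTo (ucpOverwrite Φ Y χ) {σ | Sat Φ σ} {σ | Sat Φ σ ∧ ∀ y ∈ Y, σ y = χ y} :=
  fun _ hσ => ⟨sat_ucpOverwrite hc hσ, fun _ hy => ucpOverwrite_of_derived hc _ (.base hy)⟩

end UnitPropagation

theorem Z_le_two_pow {n : ℕ} (Φ : Finset (Clause n)) : Z Φ ≤ 2 ^ n :=
  (Set.ncard_le_card _).trans_eq (by simp)

/-- For any 2-SAT formula `Φ`, set of variables `Y` and assignment `χ` on `Y`: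
`Z(Φ) ≤ 2^{|I_χ|} · max (Z(Φ,χ), 1)`, where `I_χ` comes from Unit Clause Propagation. -/
theorem stmt_13 {n : ℕ} (Φ : Finset (Clause n)) (Y : Finset (Fin n)) (χ : Fin n → Bool) :
    Z Φ ≤ 2 ^ UCPsize Φ Y χ * max (Zext Φ Y χ) 1 := by
  unfold UCPsize
  split_ifs with hc
  · exact (Z_le_two_pow Φ).trans (Nat.le_mul_of_pos_right _ (by positivity))
  · calc Z Φ ≤ Zext Φ Y χ * 2 ^ Set.ncard {x | ∃ b, Derived Φ Y χ x b} := by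
          simpa only [Z, Zext, Nat.card_eq_fintype_card, Fintype.card_bool] using
            Set.ncard_le_ncard_mul_pow_of_mapsTo (ucpOverwrite_mapsTo hc)
              fun σ _ hx => ucpOverwrite_of_not_derived σ hx
      _ ≤ _ := by rw [mul_comm]; gcongr; exact le_max_left _ _
end

section
/- Let T be a rooted 2-SAT tree formula (its clause/variable incidence graph is a tree rooted at variable o with boundary variables at depth 2ℓ). Let σ⁺ be the top-down boundary assignment constructed by setting σ⁺_o = 1 and, recursively, for a variable v with parent clause a and grandparent variable u, σ⁺_v = sign(a,v) if sign(a,u) ≠ σ⁺_u and σ⁺_v = -sign(a,v) otherwise. Then for every variable x of T and every satisfying assignment τ of T: Z(T_x, τ, σ⁺_x)/Z(T_x, τ) ≤ Z(T_x, σ⁺, σ⁺_x)/Z(T_x, σ⁺), where T_x is the subtree rooted at x, Z(T_x, τ) counts satisfying assignments of T_x agreeing with τ on the depth-2ℓ boundary, and Z(T_x, τ, t) counts those additionally assigning value t to x. -/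
/-- A rooted 2-SAT tree formula with variables at even depths and clauses at odd depths,
all boundary (leaf) variables at variable-depth `ℓ`.  A variable node has finitely many
clause-children; the clause `i` contains the parent variable with sign `su i` and the
child variable with sign `sv i` (`true` = positive literal). -/
inductive TF : ℕ → Type
  | leaf : TF 0
  | node {ℓ : ℕ} (k : ℕ) (su sv : Fin k → Bool) (child : Fin k → TF ℓ) : TF (ℓ + 1)

/-- Boundary conditions of a tree formula: one Boolean per depth-`ℓ` (leaf) variable. -/
def Bd : ∀ {ℓ : ℕ}, TF ℓ → Type
  | _, .leaf => Bool
  | _, .node k _ _ child => ∀ i : Fin k, Bd (child i)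

/-- Assignments of all variables of a tree formula. -/
def Asg : ∀ {ℓ : ℕ}, TF ℓ → Type
  | _, .leaf => Bool
  | _, .node k _ _ child => Bool × ∀ i : Fin k, Asg (child i)

/-- Value of the root variable under an assignment. -/
def rootVal : ∀ {ℓ : ℕ} (t : TF ℓ), Asg t → Bool
  | _, .leaf, a => a
  | _, .node _ _ _ _, a => a.1

/-- The boundary condition induced by an assignment. -/
def boundaryOf : ∀ {ℓ : ℕ} (t : TF ℓ), Asg t → Bd t
  | _, .leaf, a => a
  | _, .node _ _ _ child, a => fun i => boundaryOf (child i) (a.2 i)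

/-- The assignment satisfies all clauses of the tree formula. -/
def SatT : ∀ {ℓ : ℕ} (t : TF ℓ), Asg t → Prop
  | _, .leaf, _ => True
  | _, .node _ su sv child, a =>
      ∀ i, (a.1 = su i ∨ rootVal (child i) (a.2 i) = sv i) ∧ SatT (child i) (a.2 i)

/-- `Zb t b r`: the number of satisfying assignments of `t` that agree with the boundary
condition `b` on the depth-`ℓ` variables and assign the value `r` to the root. -/
def Zb : ∀ {ℓ : ℕ} (t : TF ℓ), Bd t → Bool → ℕ
  | _, .leaf, b, r => if (show Bool from b) = r then 1 else 0
  | _, .node k su sv child, b, r =>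
      ∏ i : Fin k, ∑ c : Bool,
        if r = su i ∨ c = sv i then Zb (child i) (b i) c else 0

/-- The extremal boundary condition `σ⁺` constructed top-down from the root value `r`:
a child variable `v` of a clause `a` with parent `u` receives `σ⁺_v = sign(a,v)` if
`sign(a,u) ≠ σ⁺_u`, and `σ⁺_v = -sign(a,v)` otherwise. -/
def sigP : ∀ {ℓ : ℕ} (t : TF ℓ), Bool → Bd t
  | _, .leaf, r => r
  | _, .node _ su sv child, r =>
      fun i => sigP (child i) (if su i = r then !(sv i) else sv i)

/-! Write `Z_b(r)` for the number of satisfying assignments with boundary `b` and root value `r`;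
the claim is that `b = σ⁺(r)` maximises the odds `Z_b(r) / Z_b(!r)`. At a node, `Z_b(r)` is a
product over the clauses below the root of one factor per clause: the child's total count if `r`
satisfies the clause, its count at the satisfying value `sv` otherwise. Odds multiply, so it is
enough to compare single clause factors, and that comparison is the inductive hypothesis at the
value `σ⁺` gives the child. -/

/-- The odds of `r` against `!r` under `f` are at most those under `g`, cross-multiplied so
that zero counts need no special case. -/
def OddsLE (f g : Bool → ℕ) (r : Bool) : Prop :=
  f r * g (!r) ≤ g r * f (!r)

theorem OddsLE.prod {ι : Type*} (s : Finset ι) {F G : ι → Bool → ℕ} {r : Bool}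
    (h : ∀ i ∈ s, OddsLE (F i) (G i) r) :
    OddsLE (fun x => ∏ i ∈ s, F i x) (fun x => ∏ i ∈ s, G i x) r := by
  unfold OddsLE
  rw [← Finset.prod_mul_distrib, ← Finset.prod_mul_distrib]
  exact Finset.prod_le_prod' h

theorem OddsLE.div_le {f g : Bool → ℕ} {r : Bool} (h : OddsLE f g r) (hg : 0 < g r) :
    (f r : ℝ) / ((f true + f false : ℕ) : ℝ) ≤
      (g r : ℝ) / ((g true + g false : ℕ) : ℝ) := by
  have total (u : Bool → ℕ) : u true + u false = u r + u (!r) := by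
    cases r <;> simp [add_comm]
  rw [total f, total g]
  rcases Nat.eq_zero_or_pos (f r + f (!r)) with hf | hf
  · rw [show f r = 0 by omega]
    simp only [Nat.cast_zero, zero_div]
    positivity
  have hg' : 0 < g r + g (!r) := hg.trans_le (Nat.le_add_right _ _)
  rw [div_le_div_iff₀ (by exact_mod_cast hf) (by exact_mod_cast hg')]
  have h' : (f r : ℝ) * g (!r) ≤ g r * f (!r) := by exact_mod_cast h
  push_cast
  nlinarith

def clauseFactor (f : Bool → ℕ) (su sv r : Bool) : ℕ :=
  ∑ c : Bool, if r = su ∨ c = sv then f c else 0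

theorem clauseFactor_pos {f : Bool → ℕ} {su sv r : Bool}
    (h : 0 < f (if su = r then !sv else sv)) : 0 < clauseFactor f su sv r := by
  cases su <;> cases sv <;> cases r <;> simp [clauseFactor] at h ⊢ <;> omega

theorem OddsLE.clauseFactor {f g : Bool → ℕ} {su sv r : Bool}
    (h : OddsLE f g (if su = r then !sv else sv)) :
    OddsLE (clauseFactor f su sv) (clauseFactor g su sv) r := by
  -- each side gains the same cross term `f sv * g sv` over `h`
  cases su <;> cases sv <;> cases r <;> simp [OddsLE, _root_.clauseFactor] at h ⊢ <;> nlinarith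

theorem Zb_node {ℓ : ℕ} (k : ℕ) (su sv : Fin k → Bool) (child : Fin k → TF ℓ)
    (b : Bd (TF.node k su sv child)) :
    Zb (.node k su sv child) b =
      fun r => ∏ i, clauseFactor (Zb (child i) (b i)) (su i) (sv i) r :=
  rfl

theorem Zb_sigP_pos {ℓ : ℕ} (t : TF ℓ) (r : Bool) : 0 < Zb t (sigP t r) r := by
  induction t generalizing r with
  | leaf => simp [Zb, sigP]
  | node k su sv child ih =>
    rw [Zb_node]
    exact Finset.prod_pos fun i _ => clauseFactor_pos (ih i _)

theorem oddsLE_Zb_sigP {ℓ : ℕ} (t : TF ℓ) (b : Bd t) (r : Bool) :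
    OddsLE (Zb t b) (Zb t (sigP t r)) r := by
  induction t generalizing r with
  | leaf => unfold OddsLE; cases b <;> cases r <;> decide
  | node k su sv child ih =>
    rw [Zb_node, Zb_node]
    exact OddsLE.prod _ fun i _ => (ih i (b i) _).clauseFactor

theorem stmt_18_general {ℓ : ℕ} (t : TF ℓ) (r : Bool) (τ : Asg t) :
    (Zb t (boundaryOf t τ) r : ℝ) /
        ((Zb t (boundaryOf t τ) true + Zb t (boundaryOf t τ) false : ℕ) : ℝ) ≤
      (Zb t (sigP t r) r : ℝ) /
        ((Zb t (sigP t r) true + Zb t (sigP t r) false : ℕ) : ℝ) :=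
  (oddsLE_Zb_sigP t _ r).div_le (Zb_sigP_pos t r)

/-- Extremality of the boundary condition `σ⁺` (Claim for every subtree rooted at a
variable `x` with designated value `r = σ⁺_x`): for every satisfying assignment `τ`,
`Z(T_x, τ, σ⁺_x) / Z(T_x, τ) ≤ Z(T_x, σ⁺, σ⁺_x) / Z(T_x, σ⁺)`. -/
theorem stmt_18 {ℓ : ℕ} (t : TF ℓ) (r : Bool) (τ : Asg t) (hτ : SatT t τ) :
    (Zb t (boundaryOf t τ) r : ℝ) /
        ((Zb t (boundaryOf t τ) true + Zb t (boundaryOf t τ) false : ℕ) : ℝ) ≤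
      (Zb t (sigP t r) r : ℝ) /
        ((Zb t (sigP t r) true + Zb t (sigP t r) false : ℕ) : ℝ) :=
  stmt_18_general t r τ
end

section
/- Let T be a (possibly infinite) 2-SAT tree formula and x a variable of T, s ∈ {±1}. Define the implication subtree T_{x,s} by imposing value s on x and recursively, for each clause-child a of an assigned variable y that is not satisfied by y's imposed value, imposing on the other variable z of a the value sign(a,z). Then the imposed values constitute a partial assignment satisfying every clause of T that contains at least one variable of T_{x,s}, and any leaf variable y of T_{x,s} has all its clause-children in T automatically satisfied by its imposed value. -/
/-- A (possibly infinite) rooted 2-SAT tree formula: variable nodes are finite sequences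
(paths from the root `[]`); the variable node `p` has `k p` clause-children, and its
`j`-th clause contains the parent variable `p` with sign `su p j` and the child variable
`p ++ [j]` with sign `sv p j` (`true` = positive literal). -/
structure TreeFormula where
  k : List ℕ → ℕ
  su : List ℕ → ℕ → Bool
  sv : List ℕ → ℕ → Bool

/-- `ValidExt T pre path` : starting from the variable node `pre`, `path` descends through
existing clause-children at every step. -/
def ValidExt (T : TreeFormula) : List ℕ → List ℕ → Prop
  | _, [] => True
  | pre, j :: rest => j < T.k pre ∧ ValidExt T (pre ++ [j]) rest

/-- The value (if any) imposed on the node `pre ++ path` by the top-down implication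
process, given that `pre` carries the imposed value `s`: a clause already satisfied by the
parent's imposed value is not traversed, while an unsatisfied clause forces on its child
variable the value of its literal sign. -/
def imp (T : TreeFormula) : Bool → List ℕ → List ℕ → Option Bool
  | s, _, [] => some s
  | s, pre, j :: rest =>
      if s = T.su pre j then none else imp T (T.sv pre j) (pre ++ [j]) rest

/-- The partial assignment of the implication subtree `T_{x,s}` rooted at the root
variable `x = []` with initial imposed value `s`. -/
def imposed (T : TreeFormula) (s : Bool) (p : List ℕ) : Option Bool := imp T s [] p

/-!
A variable receives a value only when its parent's imposed value fails to satisfy the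
connecting clause, and then it receives exactly the sign of its own literal in that clause.
Hence every clause touching an imposed variable is satisfied either by its parent's value or
by its child's, and a leaf of `T_{x,s}` is a leaf only because its value satisfies each of its
clauses.
-/

lemma imp_append_singleton (T : TreeFormula) (s : Bool) (pre path : List ℕ) (j : ℕ) :
    imp T s pre (path ++ [j]) =
      (imp T s pre path).bind
        fun b => if b = T.su (pre ++ path) j then none else some (T.sv (pre ++ path) j) := by
  induction path generalizing s pre with
  | nil => simp [imp]
  | cons a rest ih =>
    by_cases h : s = T.su pre a
    · simp [imp, h]
    · simp [imp, h, ih]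

lemma imposed_append_singleton (T : TreeFormula) (s : Bool) (p : List ℕ) (j : ℕ) :
    imposed T s (p ++ [j]) =
      (imposed T s p).bind fun b => if b = T.su p j then none else some (T.sv p j) :=
  imp_append_singleton T s [] p j

lemma imposed_append_singleton_eq_none {T : TreeFormula} {s : Bool} {p : List ℕ}
    (hp : imposed T s p = none) (j : ℕ) : imposed T s (p ++ [j]) = none := by
  simp [imposed_append_singleton, hp]

lemma imposed_append_singleton_of_ne {T : TreeFormula} {s b : Bool} {p : List ℕ} {j : ℕ}
    (hp : imposed T s p = some b) (hb : b ≠ T.su p j) :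
    imposed T s (p ++ [j]) = some (T.sv p j) := by
  simp [imposed_append_singleton, hp, hb]

/-- The imposed values form a partial assignment satisfying every clause of `T` that
contains at least one variable of the implication subtree `T_{x,s}`; moreover every leaf
variable of `T_{x,s}` (an imposed variable none of whose clause-children's variables is
imposed) has all of its clause-children automatically satisfied by its imposed value. -/
theorem stmt_19 (T : TreeFormula) (s : Bool) :
    (∀ p : List ℕ, ValidExt T [] p → ∀ j : ℕ, j < T.k p →
      (imposed T s p ≠ none ∨ imposed T s (p ++ [j]) ≠ none) →
      (imposed T s p = some (T.su p j) ∨ imposed T s (p ++ [j]) = some (T.sv p j))) ∧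
    (∀ p : List ℕ, ValidExt T [] p → ∀ b : Bool, imposed T s p = some b →
      (∀ j : ℕ, j < T.k p → imposed T s (p ++ [j]) = none) →
      ∀ j : ℕ, j < T.k p → b = T.su p j) := by
  constructor
  · intro p _ j _ himposed
    rcases hp : imposed T s p with _ | b
    · exact (himposed.resolve_left (not_not.2 hp) (imposed_append_singleton_eq_none hp j)).elim
    · by_cases hb : b = T.su p j
      · exact Or.inl (by rw [hb])
      · exact Or.inr (imposed_append_singleton_of_ne hp hb)
  · intro p _ b hp hleaf j hj
    by_contra hb
    exact Option.some_ne_none _ ((imposed_append_singleton_of_ne hp hb).symm.trans (hleaf j hj))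
end
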